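/- Suppose φ, Xα, Xβ, ξ : D → ℝ⁴ are smooth, satisfy the structure system, and are orthonormal at every point of D. Define B₂(x) = −g(x)/2 − √5 and C₂(x) = X₀''(x) − g(x). Then the map (x,y) ↦ −B₂(x) Xα(x,y) + C₂(x) ξ(x,y) has identically vanishing partial derivative in y (it depends only on x), and for every x ∈ ℝ one has B₂(x)² + C₂(x)² = g(x)·(2X₀(x) − x X₀'(x) − g(x) + √5) > 0. -/

import Mathlib

open Real Set

noncomputable section

/-- `h(x,y) = 2X₀(x) − x X₀'(x) + y² g(x) + √5`. -/
def hfun (X0 g : ℝ → ℝ) (x y : ℝ) : ℝ :=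
  2 * X0 x - x * deriv X0 x + y ^ 2 * g x + Real.sqrt 5

/-- `a₁(x,y) = (2y/(x h(x,y)))(X₀(x) + √5/2)`. -/
def a1 (X0 g : ℝ → ℝ) (x y : ℝ) : ℝ :=
  2 * y / (x * hfun X0 g x y) * (X0 x + Real.sqrt 5 / 2)

/-- `b₁(x,y) = −(1/(x h(x,y)))(X₀(x) + √5/2 + √5(x² − y²))`. -/
def b1 (X0 g : ℝ → ℝ) (x y : ℝ) : ℝ :=
  -(1 / (x * hfun X0 g x y)) * (X0 x + Real.sqrt 5 / 2 + Real.sqrt 5 * (x ^ 2 - y ^ 2))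

/-- `c₁(x,y) = −(2/(x h(x,y)))(X₀(x) + √5/2)`. -/
def c1 (X0 g : ℝ → ℝ) (x y : ℝ) : ℝ :=
  -(2 / (x * hfun X0 g x y)) * (X0 x + Real.sqrt 5 / 2)

/-- `a₂(x,y) = −(1/h(x,y))(2X₀(x) + √5 − (x² + y²) g(x))`. -/
def a2 (X0 g : ℝ → ℝ) (x y : ℝ) : ℝ :=
  -(1 / hfun X0 g x y) * (2 * X0 x + Real.sqrt 5 - (x ^ 2 + y ^ 2) * g x)

/-- `b₂(x,y) = −(2y/h(x,y))(g(x)/2 + √5)`. -/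
def b2 (X0 g : ℝ → ℝ) (x y : ℝ) : ℝ :=
  -(2 * y / hfun X0 g x y) * (g x / 2 + Real.sqrt 5)

/-- `c₂(x,y) = (2y/h(x,y))(X₀''(x) − g(x))`. -/
def c2 (X0 g : ℝ → ℝ) (x y : ℝ) : ℝ :=
  2 * y / hfun X0 g x y * (iteratedDeriv 2 X0 x - g x)

end

noncomputable section

/-- Euclidean `ℝ⁴`. -/
abbrev E4 := EuclideanSpace ℝ (Fin 4)

/-- The maps `φ, Xα, Xβ, ξ : D → ℝ⁴` satisfy the structure system
`∂φ/∂x = −a₁Xα`, `∂Xα/∂x = a₁φ − b₁ξ − c₁Xβ`, `∂Xβ/∂x = c₁Xα`, `∂ξ/∂x = b₁Xα`,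
`∂φ/∂y = −a₂Xβ`, `∂Xβ/∂y = a₂φ − b₂ξ − c₂Xα`, `∂Xα/∂y = c₂Xβ`, `∂ξ/∂y = b₂Xβ`
on `D = {x > 0}`. -/
def StructSys (X0 g : ℝ → ℝ) (φ Xa Xb ξ : ℝ → ℝ → E4) : Prop :=
  ∀ x y : ℝ, 0 < x →
    HasDerivAt (fun s => φ s y) ((-a1 X0 g x y) • Xa x y) x ∧
    HasDerivAt (fun s => Xa s y)
      (a1 X0 g x y • φ x y - b1 X0 g x y • ξ x y - c1 X0 g x y • Xb x y) x ∧
    HasDerivAt (fun s => Xb s y) (c1 X0 g x y • Xa x y) x ∧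
    HasDerivAt (fun s => ξ s y) (b1 X0 g x y • Xa x y) x ∧
    HasDerivAt (fun t => φ x t) ((-a2 X0 g x y) • Xb x y) y ∧
    HasDerivAt (fun t => Xb x t)
      (a2 X0 g x y • φ x y - b2 X0 g x y • ξ x y - c2 X0 g x y • Xa x y) y ∧
    HasDerivAt (fun t => Xa x t) (c2 X0 g x y • Xb x y) y ∧
    HasDerivAt (fun t => ξ x t) (b2 X0 g x y • Xb x y) y

/-- Smoothness of a two-parameter map on `D = {x > 0}`. -/
def SmoothOnD (φ : ℝ → ℝ → E4) : Prop :=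
  ContDiffOn ℝ (⊤ : ℕ∞) (fun p : ℝ × ℝ => φ p.1 p.2) {p : ℝ × ℝ | 0 < p.1}

/-- `(φ, Xα, Xβ, ξ)` is an orthonormal system at every point of `D = {x > 0}`. -/
def OrthFrame (φ Xa Xb ξ : ℝ → ℝ → E4) : Prop :=
  ∀ x y : ℝ, 0 < x → Orthonormal ℝ ![φ x y, Xa x y, Xb x y, ξ x y]

/-- `f` is an associated curvature surface: `∂f/∂x = ((x²−y²)/(x h)) Xα` and
`∂f/∂y = (2y/h) Xβ` on `D = {x > 0}`. -/
def CurvSurf (X0 g : ℝ → ℝ) (Xa Xb f : ℝ → ℝ → E4) : Prop :=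
  ∀ x y : ℝ, 0 < x →
    HasDerivAt (fun s => f s y)
      (((x ^ 2 - y ^ 2) / (x * hfun X0 g x y)) • Xa x y) x ∧
    HasDerivAt (fun t => f x t) ((2 * y / hfun X0 g x y) • Xb x y) y

end

open Real Set

private lemma aux_sum_geom (m : ℕ) : Summable (fun k : ℕ => ((k:ℝ)+1)^m * (1/4 : ℝ)^k) := by
  have h := summable_pow_mul_geometric_of_norm_lt_one (R := ℝ) (r := (1/4:ℝ)) m
    (by rw [Real.norm_eq_abs, abs_lt]; constructor <;> norm_num)
  have h2 := (summable_nat_add_iff 1).mpr h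
  have h3 := h2.mul_left 4
  refine h3.congr fun k => ?_
  push_cast
  rw [pow_succ]
  ring

private lemma aux_master {a : ℕ → ℝ} {X0 : ℝ → ℝ}
    (hX0 : ∀ x : ℝ, HasSum (fun k : ℕ => a (k + 1) * x ^ (2 * (k + 1))) (X0 x - 5 / 2))
    (m : ℕ) (r : ℝ) :
    Summable (fun k : ℕ => ((k:ℝ)+1)^m * |a (k+1)| * r^(2*k)) := by
  have hq0 : (0:ℝ) ≤ r^2 := sq_nonneg r
  set q : ℝ := r^2 with hq
  set ρ : ℝ := 4*q+1 with hρ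
  have hρ0 : (0:ℝ) < ρ := by positivity
  set x : ℝ := Real.sqrt ρ with hxdef
  have hx2 : x^2 = ρ := Real.sq_sqrt hρ0.le
  have hs := (hX0 x).summable
  obtain ⟨C, hC⟩ := (hs.tendsto_atTop_zero.abs).bddAbove_range
  have hCk : ∀ k : ℕ, |a (k+1)| * ρ^(k+1) ≤ C := by
    intro k
    have h1 : |a (k+1) * x ^ (2*(k+1))| ≤ C := hC ⟨k, rfl⟩
    have hxpow : x^(2*(k+1)) = ρ^(k+1) := by rw [pow_mul, hx2]
    rwa [abs_mul, abs_of_nonneg (by positivity : (0:ℝ) ≤ x^(2*(k+1))), hxpow] at h1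
  have hsum := (aux_sum_geom m).mul_left (C/ρ)
  refine Summable.of_nonneg_of_le (fun k => ?_) (fun k => ?_) hsum
  · have : r^(2*k) = q^k := by rw [pow_mul]
    rw [this]
    positivity
  · have h2 : r^(2*k) = q^k := by rw [pow_mul]
    rw [h2]
    have hq4 : q ≤ ρ/4 := by rw [hρ]; linarith
    have h3 : |a (k+1)| * q^k ≤ |a (k+1)| * (ρ/4)^k :=
      mul_le_mul_of_nonneg_left (pow_le_pow_left₀ hq0 hq4 k) (abs_nonneg _)
    have h6 : |a (k+1)| * ρ^k ≤ C/ρ := by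
      rw [le_div_iff₀ hρ0]
      calc |a (k+1)| * ρ^k * ρ = |a (k+1)| * ρ^(k+1) := by rw [pow_succ]; ring
        _ ≤ C := hCk k
    have h4 : |a (k+1)| * (ρ/4)^k ≤ (C/ρ) * (1/4)^k := by
      have h7 : (0:ℝ) < 4^k := by positivity
      calc |a (k+1)| * (ρ/4)^k = (|a (k+1)| * ρ^k) * (1/4)^k := by
            rw [div_pow, one_div, inv_pow]; field_simp
        _ ≤ (C/ρ) * (1/4)^k := by
            apply mul_le_mul_of_nonneg_right h6 (by positivity)
    calc ((k:ℝ)+1)^m * |a (k+1)| * q^k = ((k:ℝ)+1)^m * (|a (k+1)| * q^k) := by ring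
      _ ≤ ((k:ℝ)+1)^m * ((C/ρ) * (1/4)^k) :=
          mul_le_mul_of_nonneg_left (h3.trans h4) (by positivity)
      _ = C/ρ * (((k:ℝ)+1)^m * (1/4)^k) := by ring

noncomputable def Sa1 (a : ℕ → ℝ) (x : ℝ) : ℝ :=
  ∑' k : ℕ, (2*(k:ℝ)+2) * a (k+1) * x^(2*k+1)
noncomputable def Sa2 (a : ℕ → ℝ) (x : ℝ) : ℝ :=
  ∑' k : ℕ, (2*(k:ℝ)+2)*(2*(k:ℝ)+1) * a (k+1) * x^(2*k)
noncomputable def Sa3 (a : ℕ → ℝ) (x : ℝ) : ℝ :=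
  ∑' k : ℕ, (2*(k:ℝ)+2)*(2*(k:ℝ)+1)*(2*(k:ℝ)) * a (k+1) * x^(2*k-1)

section sums
variable {a : ℕ → ℝ} {X0 : ℝ → ℝ}
  (hX0 : ∀ x : ℝ, HasSum (fun k : ℕ => a (k + 1) * x ^ (2 * (k + 1))) (X0 x - 5 / 2))

include hX0

private lemma aux_s1 (x : ℝ) :
    Summable (fun k : ℕ => (2*(k:ℝ)+2) * a (k+1) * x^(2*k+1)) := by
  apply Summable.of_norm
  refine Summable.of_nonneg_of_le (fun k => norm_nonneg _) (fun k => ?_)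
    ((aux_master hX0 1 |x|).mul_left (2*|x|))
  have h0 : (0:ℝ) ≤ 2*(k:ℝ)+2 := by positivity
  calc ‖(2*(k:ℝ)+2) * a (k+1) * x^(2*k+1)‖
      = (2*(k:ℝ)+2) * |a (k+1)| * |x|^(2*k+1) := by
        rw [Real.norm_eq_abs, abs_mul, abs_mul, abs_pow, abs_of_nonneg h0]
    _ = 2*|x| * (((k:ℝ)+1)^1 * |a (k+1)| * |x|^(2*k)) := by rw [pow_succ]; ring
    _ ≤ 2*|x| * (((k:ℝ)+1)^1 * |a (k+1)| * |x|^(2*k)) := le_refl _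

private lemma aux_s2 (x : ℝ) :
    Summable (fun k : ℕ => (2*(k:ℝ)+2)*(2*(k:ℝ)+1) * a (k+1) * x^(2*k)) := by
  apply Summable.of_norm
  refine Summable.of_nonneg_of_le (fun k => norm_nonneg _) (fun k => ?_)
    ((aux_master hX0 2 |x|).mul_left 4)
  have h0 : (0:ℝ) ≤ (2*(k:ℝ)+2)*(2*(k:ℝ)+1) := by positivity
  have hk : (0:ℝ) ≤ (k:ℝ) := Nat.cast_nonneg k
  have hP : (0:ℝ) ≤ |a (k+1)| * |x|^(2*k) :=
    mul_nonneg (abs_nonneg _) (pow_nonneg (abs_nonneg _) _)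
  calc ‖(2*(k:ℝ)+2)*(2*(k:ℝ)+1) * a (k+1) * x^(2*k)‖
      = (2*(k:ℝ)+2)*(2*(k:ℝ)+1) * (|a (k+1)| * |x|^(2*k)) := by
        rw [Real.norm_eq_abs, abs_mul, abs_mul, abs_pow, abs_of_nonneg h0, mul_assoc]
    _ ≤ 4*(((k:ℝ)+1)^2) * (|a (k+1)| * |x|^(2*k)) := by nlinarith
    _ = 4 * (((k:ℝ)+1)^2 * |a (k+1)| * |x|^(2*k)) := by ring

private lemma aux_s3 (x : ℝ) :
    Summable (fun k : ℕ => (2*(k:ℝ)+2)*(2*(k:ℝ)+1)*(2*(k:ℝ)) * a (k+1) * x^(2*k-1)) := by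
  apply Summable.of_norm
  refine Summable.of_nonneg_of_le (fun k => norm_nonneg _) (fun k => ?_)
    ((aux_master hX0 3 (1+|x|)).mul_left 8)
  have h0 : (0:ℝ) ≤ (2*(k:ℝ)+2)*(2*(k:ℝ)+1)*(2*(k:ℝ)) := by positivity
  have hk : (0:ℝ) ≤ (k:ℝ) := Nat.cast_nonneg k
  have hxb : |x|^(2*k-1) ≤ (1+|x|)^(2*k) := by
    calc |x|^(2*k-1) ≤ (1+|x|)^(2*k-1) :=
          pow_le_pow_left₀ (abs_nonneg x) (by linarith [abs_nonneg x]) _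
      _ ≤ (1+|x|)^(2*k) :=
          pow_le_pow_right₀ (by linarith [abs_nonneg x]) (Nat.sub_le _ _)
  calc ‖(2*(k:ℝ)+2)*(2*(k:ℝ)+1)*(2*(k:ℝ)) * a (k+1) * x^(2*k-1)‖
      = ((2*(k:ℝ)+2)*(2*(k:ℝ)+1)*(2*(k:ℝ)) * |a (k+1)|) * |x|^(2*k-1) := by
        rw [Real.norm_eq_abs, abs_mul, abs_mul, abs_pow, abs_of_nonneg h0]
    _ ≤ (8*(((k:ℝ)+1)^3) * |a (k+1)|) * (1+|x|)^(2*k) := by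
        apply mul_le_mul
        · apply mul_le_mul_of_nonneg_right _ (abs_nonneg _)
          nlinarith
        · exact hxb
        · exact pow_nonneg (abs_nonneg _) _
        · positivity
    _ = 8 * (((k:ℝ)+1)^3 * |a (k+1)| * (1+|x|)^(2*k)) := by ring

omit hX0 in
private lemma aux_memIoo (x : ℝ) : x ∈ Ioo (-(|x|+1)) (|x|+1) :=
  ⟨by linarith [neg_abs_le x], by linarith [le_abs_self x]⟩

private lemma aux_d1 : ∀ x : ℝ, HasDerivAt X0 (Sa1 a x) x := by
  intro x
  have hXeq : X0 = fun z => 5/2 + ∑' k : ℕ, a (k+1) * z^(2*(k+1)) := by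
    funext z
    have := (hX0 z).tsum_eq
    linarith
  rw [hXeq]
  apply HasDerivAt.const_add
  set R : ℝ := |x| + 1 with hR
  have hR0 : (0:ℝ) < R := by positivity
  have hu : Summable (fun k : ℕ => 2*R * (((k:ℝ)+1)^1 * |a (k+1)| * R^(2*k))) :=
    (aux_master hX0 1 R).mul_left _
  have hgd : ∀ (k : ℕ) (z : ℝ), z ∈ Ioo (-R) R →
      HasDerivAt (fun w => a (k+1) * w^(2*(k+1))) ((2*(k:ℝ)+2) * a (k+1) * z^(2*k+1)) z := by
    intro k z _
    have h := (hasDerivAt_pow (2*(k+1)) z).const_mul (a (k+1))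
    refine h.congr_deriv ?_
    have he : 2*(k+1)-1 = 2*k+1 := by omega
    rw [he]
    push_cast
    ring
  have hgb : ∀ (k : ℕ) (z : ℝ), z ∈ Ioo (-R) R →
      ‖(2*(k:ℝ)+2) * a (k+1) * z^(2*k+1)‖ ≤ 2*R * (((k:ℝ)+1)^1 * |a (k+1)| * R^(2*k)) := by
    intro k z hz
    have hzR : |z| ≤ R := by
      rw [abs_le]
      exact ⟨hz.1.le, hz.2.le⟩
    have h0 : (0:ℝ) ≤ 2*(k:ℝ)+2 := by positivity
    calc ‖(2*(k:ℝ)+2) * a (k+1) * z^(2*k+1)‖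
        = (2*(k:ℝ)+2) * |a (k+1)| * |z|^(2*k+1) := by
          rw [Real.norm_eq_abs, abs_mul, abs_mul, abs_pow, abs_of_nonneg h0]
      _ ≤ (2*(k:ℝ)+2) * |a (k+1)| * R^(2*k+1) := by
          apply mul_le_mul_of_nonneg_left (pow_le_pow_left₀ (abs_nonneg z) hzR _)
          positivity
      _ = 2*R * (((k:ℝ)+1)^1 * |a (k+1)| * R^(2*k)) := by rw [pow_succ]; ring
  have hsum0 : Summable (fun k : ℕ => a (k+1) * (0:ℝ)^(2*(k+1))) := by
    have h0 : (fun k : ℕ => a (k+1) * (0:ℝ)^(2*(k+1))) = fun _ => 0 := by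
      funext k
      rw [zero_pow (by omega)]
      ring
    rw [h0]
    exact summable_zero
  exact hasDerivAt_tsum_of_isPreconnected hu isOpen_Ioo isPreconnected_Ioo
    hgd hgb ⟨by linarith, by linarith⟩ hsum0 (aux_memIoo x)

private lemma aux_d2 : ∀ x : ℝ, HasDerivAt (Sa1 a) (Sa2 a x) x := by
  intro x
  set R : ℝ := |x| + 1 with hR
  have hR0 : (0:ℝ) < R := by positivity
  have hu : Summable (fun k : ℕ => 4 * (((k:ℝ)+1)^2 * |a (k+1)| * R^(2*k))) :=
    (aux_master hX0 2 R).mul_left _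
  have hgd : ∀ (k : ℕ) (z : ℝ), z ∈ Ioo (-R) R →
      HasDerivAt (fun w => (2*(k:ℝ)+2) * a (k+1) * w^(2*k+1))
        ((2*(k:ℝ)+2)*(2*(k:ℝ)+1) * a (k+1) * z^(2*k)) z := by
    intro k z _
    have h := (hasDerivAt_pow (2*k+1) z).const_mul ((2*(k:ℝ)+2) * a (k+1))
    refine h.congr_deriv ?_
    have he : 2*k+1-1 = 2*k := by omega
    rw [he]
    push_cast
    ring
  have hgb : ∀ (k : ℕ) (z : ℝ), z ∈ Ioo (-R) R →
      ‖(2*(k:ℝ)+2)*(2*(k:ℝ)+1) * a (k+1) * z^(2*k)‖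
        ≤ 4 * (((k:ℝ)+1)^2 * |a (k+1)| * R^(2*k)) := by
    intro k z hz
    have hzR : |z| ≤ R := by
      rw [abs_le]
      exact ⟨hz.1.le, hz.2.le⟩
    have h0 : (0:ℝ) ≤ (2*(k:ℝ)+2)*(2*(k:ℝ)+1) := by positivity
    have hk : (0:ℝ) ≤ (k:ℝ) := Nat.cast_nonneg k
    have hP : |a (k+1)| * |z|^(2*k) ≤ |a (k+1)| * R^(2*k) :=
      mul_le_mul_of_nonneg_left (pow_le_pow_left₀ (abs_nonneg z) hzR _) (abs_nonneg _)
    have hP2 : (0:ℝ) ≤ |a (k+1)| * |z|^(2*k) :=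
      mul_nonneg (abs_nonneg _) (pow_nonneg (abs_nonneg _) _)
    have hP3 : (0:ℝ) ≤ |a (k+1)| * R^(2*k) :=
      mul_nonneg (abs_nonneg _) (pow_nonneg hR0.le _)
    calc ‖(2*(k:ℝ)+2)*(2*(k:ℝ)+1) * a (k+1) * z^(2*k)‖
        = (2*(k:ℝ)+2)*(2*(k:ℝ)+1) * (|a (k+1)| * |z|^(2*k)) := by
          rw [Real.norm_eq_abs, abs_mul, abs_mul, abs_pow, abs_of_nonneg h0, mul_assoc]
      _ ≤ 4*(((k:ℝ)+1)^2) * (|a (k+1)| * R^(2*k)) := by nlinarith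
      _ = 4 * (((k:ℝ)+1)^2 * |a (k+1)| * R^(2*k)) := by ring
  have hsum0 : Summable (fun k : ℕ => (2*(k:ℝ)+2) * a (k+1) * (0:ℝ)^(2*k+1)) := by
    have h0 : (fun k : ℕ => (2*(k:ℝ)+2) * a (k+1) * (0:ℝ)^(2*k+1)) = fun _ => 0 := by
      funext k
      rw [zero_pow (by omega)]
      ring
    rw [h0]
    exact summable_zero
  exact hasDerivAt_tsum_of_isPreconnected hu isOpen_Ioo isPreconnected_Ioo
    hgd hgb ⟨by linarith, by linarith⟩ hsum0 (aux_memIoo x)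

private lemma aux_d3 : ∀ x : ℝ, HasDerivAt (Sa2 a) (Sa3 a x) x := by
  intro x
  set R : ℝ := |x| + 1 with hR
  have hR0 : (0:ℝ) < R := by positivity
  have hR1 : (1:ℝ) ≤ 1 + R := by linarith
  have hu : Summable (fun k : ℕ => 8 * (((k:ℝ)+1)^3 * |a (k+1)| * (1+R)^(2*k))) :=
    (aux_master hX0 3 (1+R)).mul_left _
  have hgd : ∀ (k : ℕ) (z : ℝ), z ∈ Ioo (-R) R →
      HasDerivAt (fun w => (2*(k:ℝ)+2)*(2*(k:ℝ)+1) * a (k+1) * w^(2*k))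
        ((2*(k:ℝ)+2)*(2*(k:ℝ)+1)*(2*(k:ℝ)) * a (k+1) * z^(2*k-1)) z := by
    intro k z _
    have h := (hasDerivAt_pow (2*k) z).const_mul ((2*(k:ℝ)+2)*(2*(k:ℝ)+1) * a (k+1))
    refine h.congr_deriv ?_
    push_cast
    ring
  have hgb : ∀ (k : ℕ) (z : ℝ), z ∈ Ioo (-R) R →
      ‖(2*(k:ℝ)+2)*(2*(k:ℝ)+1)*(2*(k:ℝ)) * a (k+1) * z^(2*k-1)‖
        ≤ 8 * (((k:ℝ)+1)^3 * |a (k+1)| * (1+R)^(2*k)) := by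
    intro k z hz
    have hzR : |z| ≤ R := by
      rw [abs_le]
      exact ⟨hz.1.le, hz.2.le⟩
    have h0 : (0:ℝ) ≤ (2*(k:ℝ)+2)*(2*(k:ℝ)+1)*(2*(k:ℝ)) := by positivity
    have hk : (0:ℝ) ≤ (k:ℝ) := Nat.cast_nonneg k
    have hxb : |z|^(2*k-1) ≤ (1+R)^(2*k) := by
      calc |z|^(2*k-1) ≤ (1+R)^(2*k-1) :=
            pow_le_pow_left₀ (abs_nonneg z) (by linarith) _
        _ ≤ (1+R)^(2*k) := pow_le_pow_right₀ hR1 (Nat.sub_le _ _)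
    calc ‖(2*(k:ℝ)+2)*(2*(k:ℝ)+1)*(2*(k:ℝ)) * a (k+1) * z^(2*k-1)‖
        = ((2*(k:ℝ)+2)*(2*(k:ℝ)+1)*(2*(k:ℝ)) * |a (k+1)|) * |z|^(2*k-1) := by
          rw [Real.norm_eq_abs, abs_mul, abs_mul, abs_pow, abs_of_nonneg h0]
      _ ≤ (8*(((k:ℝ)+1)^3) * |a (k+1)|) * (1+R)^(2*k) := by
          apply mul_le_mul
          · apply mul_le_mul_of_nonneg_right _ (abs_nonneg _)
            nlinarith
          · exact hxb
          · exact pow_nonneg (abs_nonneg _) _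
          · positivity
      _ = 8 * (((k:ℝ)+1)^3 * |a (k+1)| * (1+R)^(2*k)) := by ring
  have hsum0 : Summable (fun k : ℕ => (2*(k:ℝ)+2)*(2*(k:ℝ)+1) * a (k+1) * (0:ℝ)^(2*k)) := by
    apply summable_of_ne_finset_zero (s := {0})
    intro k hk
    simp only [Finset.mem_singleton] at hk
    rw [zero_pow (by omega)]
    ring
  exact hasDerivAt_tsum_of_isPreconnected hu isOpen_Ioo isPreconnected_Ioo
    hgd hgb ⟨by linarith, by linarith⟩ hsum0 (aux_memIoo x)

omit hX0 in
private lemma aux_v1 : Sa1 a 0 = 0 := by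
  unfold Sa1
  have h0 : (fun k : ℕ => (2*(k:ℝ)+2) * a (k+1) * (0:ℝ)^(2*k+1)) = fun _ => 0 := by
    funext k
    rw [zero_pow (by omega)]
    ring
  rw [h0, tsum_zero]

omit hX0 in
private lemma aux_v2 : Sa2 a 0 = 2 * a 1 := by
  unfold Sa2
  rw [tsum_eq_single 0 (fun k hk => by rw [zero_pow (by omega)]; ring)]
  norm_num

private lemma aux_v0 : X0 0 = 5/2 := by
  have h0 : (fun k : ℕ => a (k+1) * (0:ℝ)^(2*(k+1))) = fun _ => 0 := by
    funext k
    rw [zero_pow (by omega)]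
    ring
  have h := hX0 0
  rw [h0] at h
  have := h.unique hasSum_zero
  linarith

private lemma aux_ode (ha1 : a 1 = 1)
    (harec : ∀ k : ℕ, 1 ≤ k →
      2 * ((k : ℝ) + 1) * (4 * (k : ℝ) ^ 2 + 5 / 4) * a (k + 1) + (2 * (k : ℝ) - 1) * a k = 0)
    (x : ℝ) :
    4*x^2 * Sa3 a x - 4*x*Sa2 a x + (4*x^2+9)*Sa1 a x - 4*x*X0 x = 0 := by
  set f0 : ℕ → ℝ := fun k => a (k+1) * x^(2*(k+1)) with hf0
  set f1 : ℕ → ℝ := fun k => (2*(k:ℝ)+2) * a (k+1) * x^(2*k+1) with hf1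
  set f2 : ℕ → ℝ := fun k => (2*(k:ℝ)+2)*(2*(k:ℝ)+1) * a (k+1) * x^(2*k) with hf2
  set f3 : ℕ → ℝ := fun k => (2*(k:ℝ)+2)*(2*(k:ℝ)+1)*(2*(k:ℝ)) * a (k+1) * x^(2*k-1) with hf3
  set F : ℕ → ℝ := fun j => 4*x^2 * f3 j - 4*x * f2 j + 9 * f1 j with hF
  set T : ℕ → ℝ := fun k => 4*x^2 * f1 k - 4*x * f0 k with hT
  set G : ℕ → ℝ := fun j => F j + (if j = 0 then -(10*x) else T (j-1)) with hG
  have hs0 : Summable f0 := (hX0 x).summable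
  have hs1 : Summable f1 := aux_s1 hX0 x
  have hs2 : Summable f2 := aux_s2 hX0 x
  have hs3 : Summable f3 := aux_s3 hX0 x
  have hsF : Summable F := ((hs3.mul_left (4*x^2)).sub (hs2.mul_left (4*x))).add
    (hs1.mul_left 9)
  have hsT : Summable T := (hs1.mul_left (4*x^2)).sub (hs0.mul_left (4*x))
  have hsG0 : Summable (fun j => if j = 0 then -(10*x) else T (j-1)) := by
    apply (summable_nat_add_iff 1).mp
    exact hsT.congr fun n => by simp
  have hGz : ∀ j, G j = 0 := by
    intro j
    match j with
    | 0 =>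
      simp only [hG, hF, hf1, hf2, hf3, if_pos rfl]
      push_cast
      norm_num [ha1]
      ring
    | (k+1) =>
      simp only [hG, hF, hT, hf0, hf1, hf2, hf3, if_neg (Nat.succ_ne_zero k),
        Nat.add_sub_cancel, show 2*(k+1)-1 = 2*k+1 by omega]
      have hr := harec (k+1) (Nat.le_add_left 1 k)
      push_cast at hr
      push_cast
      linear_combination (4*x^(2*k+3)) * hr
  have hGsum : ∑' j, G j = 0 := by
    have : G = fun _ => 0 := funext hGz
    rw [this, tsum_zero]
  have hsplit : ∑' j, G j = (∑' j, F j) + ∑' j, (if j = 0 then -(10*x) else T (j-1)) :=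
    Summable.tsum_add hsF hsG0
  have hshift : ∑' j, (if j = 0 then -(10*x) else T (j-1)) = -(10*x) + ∑' k, T k := by
    rw [Summable.tsum_eq_zero_add hsG0]
    have h1 : ∀ n : ℕ, (if n+1 = 0 then -(10*x) else T (n+1-1)) = T n := fun n => by simp
    simp only [h1]
    norm_num
  have hFv : ∑' j, F j = 4*x^2 * Sa3 a x - 4*x * Sa2 a x + 9 * Sa1 a x := by
    unfold Sa1 Sa2 Sa3
    rw [hF]
    rw [Summable.tsum_add ((hs3.mul_left (4*x^2)).sub (hs2.mul_left (4*x))) (hs1.mul_left 9)]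
    rw [Summable.tsum_sub (hs3.mul_left (4*x^2)) (hs2.mul_left (4*x))]
    rw [tsum_mul_left, tsum_mul_left, tsum_mul_left]
  have hTv : ∑' k, T k = 4*x^2 * Sa1 a x - 4*x * (X0 x - 5/2) := by
    unfold Sa1
    rw [hT]
    rw [Summable.tsum_sub (hs1.mul_left (4*x^2)) (hs0.mul_left (4*x))]
    rw [tsum_mul_left, tsum_mul_left, (hX0 x).tsum_eq]
  have htot := hGsum
  rw [hsplit, hshift, hFv, hTv] at htot
  linear_combination htot

end sums



/-- With `B₂(x) = −g(x)/2 − √5` and `C₂(x) = X₀''(x) − g(x)`, the map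
`(x,y) ↦ −B₂(x)Xα(x,y) + C₂(x)ξ(x,y)` has vanishing partial derivative in `y` (depends only
on `x`), and for every real `x`,
`B₂(x)² + C₂(x)² = g(x)(2X₀(x) − xX₀'(x) − g(x) + √5) > 0`. -/
theorem stmt14 (a : ℕ → ℝ) (ha1 : a 1 = 1)
    (harec : ∀ k : ℕ, 1 ≤ k →
      2 * ((k : ℝ) + 1) * (4 * (k : ℝ) ^ 2 + 5 / 4) * a (k + 1) + (2 * (k : ℝ) - 1) * a k = 0)
    (X0 : ℝ → ℝ)
    (hX0 : ∀ x : ℝ, HasSum (fun k : ℕ => a (k + 1) * x ^ (2 * (k + 1))) (X0 x - 5 / 2))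
    (g : ℝ → ℝ) (hganal : AnalyticOnNhd ℝ g Set.univ)
    (hg : ∀ x : ℝ, x ≠ 0 → g x = deriv X0 x / x) (hg0 : g 0 = 2)
    (φ Xa Xb ξ : ℝ → ℝ → E4)
    (hsm : SmoothOnD φ ∧ SmoothOnD Xa ∧ SmoothOnD Xb ∧ SmoothOnD ξ)
    (hsys : StructSys X0 g φ Xa Xb ξ)
    (horth : OrthFrame φ Xa Xb ξ) :
    let B2 : ℝ → ℝ := fun x => -(g x) / 2 - Real.sqrt 5
    let C2 : ℝ → ℝ := fun x => iteratedDeriv 2 X0 x - g x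
    (∀ x y : ℝ, 0 < x →
      HasDerivAt (fun t => (-(B2 x)) • Xa x t + C2 x • ξ x t) (0 : E4) y) ∧
    (∀ x : ℝ,
      B2 x ^ 2 + C2 x ^ 2 = g x * (2 * X0 x - x * deriv X0 x - g x + Real.sqrt 5) ∧
      0 < B2 x ^ 2 + C2 x ^ 2) := by
  intro B2 C2
  have hs5 : Real.sqrt 5 ^ 2 = 5 := Real.sq_sqrt (by norm_num)
  have hs5nn : (0:ℝ) ≤ Real.sqrt 5 := Real.sqrt_nonneg 5
  constructor
  · -- Part 1: vanishing y-derivative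
    intro x y hx
    obtain ⟨-, -, -, -, -, -, h7, h8⟩ := hsys x y hx
    have h := (h7.const_smul (-(B2 x))).add (h8.const_smul (C2 x))
    refine h.congr_deriv ?_
    rw [smul_smul, smul_smul, ← add_smul]
    have hz : (-(B2 x)) * c2 X0 g x y + C2 x * b2 X0 g x y = 0 := by
      simp only [B2, C2, b2, c2]
      ring
    rw [hz, zero_smul]
  · -- Part 2: the identity and positivity
    have hd1 : ∀ x : ℝ, HasDerivAt X0 (Sa1 a x) x := aux_d1 hX0
    have hd2 : ∀ x : ℝ, HasDerivAt (Sa1 a) (Sa2 a x) x := aux_d2 hX0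
    have hd3 : ∀ x : ℝ, HasDerivAt (Sa2 a) (Sa3 a x) x := aux_d3 hX0
    have hderiv : deriv X0 = Sa1 a := funext fun x => (hd1 x).deriv
    have hit2 : iteratedDeriv 2 X0 = Sa2 a := by
      rw [iteratedDeriv_succ, iteratedDeriv_one, hderiv]
      exact funext fun x => (hd2 x).deriv
    have hgd : ∀ x : ℝ, HasDerivAt g (deriv g x) x := fun x =>
      ((hganal x (Set.mem_univ x)).differentiableAt).hasDerivAt
    set s5 := Real.sqrt 5 with hs5def
    set Fn : ℝ → ℝ := fun x => (g x/2 + s5)^2 + (Sa2 a x - g x)^2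
      - g x * (2*X0 x - x*Sa1 a x - g x + s5) with hFn
    have key : ∀ x : ℝ, HasDerivAt Fn 0 x := by
      intro x
      have A : HasDerivAt (fun z => g z/2 + s5) (deriv g x/2) x :=
        ((hgd x).div_const 2).add_const s5
      have A2 := A.pow 2
      have B : HasDerivAt (fun z => Sa2 a z - g z) (Sa3 a x - deriv g x) x :=
        (hd3 x).sub (hgd x)
      have B2' := B.pow 2
      have hc1 : HasDerivAt (fun z => 2*X0 z) (2*Sa1 a x) x := (hd1 x).const_mul 2
      have hc2 : HasDerivAt (fun z => z * Sa1 a z) (1*Sa1 a x + x*Sa2 a x) x :=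
        (hasDerivAt_id x).mul (hd2 x)
      have hinner : HasDerivAt (fun z => 2*X0 z - z*Sa1 a z - g z + s5)
          (2*Sa1 a x - (1*Sa1 a x + x*Sa2 a x) - deriv g x) x :=
        ((hc1.sub hc2).sub (hgd x)).add_const s5
      have hC := (hgd x).mul hinner
      have h := (A2.add B2').sub hC
      refine h.congr_deriv ?_
      rcases eq_or_ne x 0 with rfl | hx
      · rw [aux_v1, aux_v2, aux_v0 hX0, hg0, ha1]
        norm_num
        ring
      · -- x ≠ 0
        have hgx : g x = Sa1 a x / x := by rw [hg x hx, hderiv]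
        have hdg : deriv g x = (Sa2 a x * x - Sa1 a x * 1) / x^2 := by
          have hev : g =ᶠ[nhds x] (fun z => Sa1 a z / z) := by
            filter_upwards [isOpen_compl_singleton.mem_nhds hx] with z hz
            rw [hg z hz, hderiv]
          have hq : HasDerivAt (fun z => Sa1 a z / z)
              ((Sa2 a x * x - Sa1 a x * 1) / x^2) x :=
            (hd2 x).div (hasDerivAt_id x) hx
          exact (hq.congr_of_eventuallyEq hev).deriv
        have hode := aux_ode hX0 ha1 harec x
        have hS3 : Sa3 a x = (4*x*Sa2 a x - (4*x^2+9)*Sa1 a x + 4*x*X0 x)/(4*x^2) := by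
          field_simp
          linarith
        rw [hS3, hdg, hgx]
        field_simp
        have hxi : x * x⁻¹ = 1 := mul_inv_cancel₀ hx
        linear_combination (16*Sa1 a x^2 - 8*x*Sa1 a x*s5 - 16*x*Sa1 a x*Sa2 a x - 16*x*Sa1 a x*X0 x
          + 16*x^2*Sa1 a x^2 + 8*x^2*s5*Sa2 a x + 16*x^2*Sa2 a x*X0 x - 16*x^3*Sa1 a x*Sa2 a x) * hxi
    have hFzero : ∀ x : ℝ, Fn x = 0 := by
      have hconst : ∀ x : ℝ, Fn x = Fn 0 := fun x =>
        is_const_of_deriv_eq_zero (fun z => (key z).differentiableAt)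
          (fun z => (key z).deriv) x 0
      have hFn0 : Fn 0 = 0 := by
        simp only [hFn]
        rw [aux_v1, aux_v2, aux_v0 hX0, hg0, ha1]
        linear_combination hs5
      intro x
      rw [hconst x, hFn0]
    have hiden : ∀ x : ℝ, B2 x ^ 2 + C2 x ^ 2
        = g x * (2 * X0 x - x * deriv X0 x - g x + Real.sqrt 5) := by
      intro x
      simp only [B2, C2]
      rw [hit2, hderiv]
      linear_combination hFzero x
    have hgc : Continuous g := by
      rw [← continuousOn_univ]
      exact hganal.continuousOn
    have hgpos : ∀ x : ℝ, 0 < g x := by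
      by_contra hcon
      push_neg at hcon
      obtain ⟨x₁, hx₁⟩ := hcon
      have h0m : (0:ℝ) ∈ Set.uIcc (g 0) (g x₁) :=
        Set.mem_uIcc.mpr (Or.inr ⟨hx₁, by rw [hg0]; norm_num⟩)
      obtain ⟨x₀, -, hx₀⟩ := intermediate_value_uIcc (hgc.continuousOn) h0m
      have hid := hiden x₀
      simp only [B2, C2] at hid
      rw [hx₀] at hid
      nlinarith [sq_nonneg (iteratedDeriv 2 X0 x₀ - 0), hs5]
    intro x
    refine ⟨hiden x, ?_⟩
    simp only [B2, C2]
    nlinarith [hgpos x, hs5, hs5nn, sq_nonneg (iteratedDeriv 2 X0 x - g x),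
      mul_nonneg (hgpos x).le hs5nn]
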